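/- Let G be a group, K ≤ G a subgroup, P ≤ G a subgroup with G = PK (Iwasawa-type decomposition). Suppose measures are normalized so that K and K∩P have measure 1 and dg = dp dk. Then restriction of functions from G to P defines an algebra homomorphism from the K-bi-invariant Hecke algebra H(G//K) to H(P//K∩P): for φ right-K-invariant and ψ K-bi-invariant, (φ*ψ)|_P = (φ|_P)*(ψ|_P). -/

import Mathlib

open MeasureTheory

/-!
Since `ψ` is left-`K`-invariant, the convolution integrand `a ↦ φ a * ψ (a⁻¹ * p₀)` is
right-`K`-invariant, so in `dg = dp dk` the inner integral over `K` is that of a constant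
against a measure of mass one, leaving the integral of the integrand over `P`.
-/

theorem integral_eq_integral_subgroup_of_mul_right_invariant {G : Type*} [Group G]
    [MeasurableSpace G] (K P : Subgroup G) (μG : Measure G) (μP : Measure P) (μK : Measure K)
    [IsProbabilityMeasure μK] (f : G → ℝ)
    (hFubini : ∫ g, f g ∂μG = ∫ p : P, (∫ k : K, f ((p : G) * (k : G)) ∂μK) ∂μP)
    (hfK : ∀ g : G, ∀ k ∈ K, f (g * k) = f g) :
    ∫ g, f g ∂μG = ∫ p : P, f p ∂μP := by
  simp only [hFubini, fun (p : P) (k : K) => hfK p k k.2, integral_const, probReal_univ,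
    one_smul]

theorem convolution_integrand_mul_right_invariant {G : Type*} [Group G] (K : Subgroup G)
    (φ ψ : G → ℝ) (hφK : ∀ g : G, ∀ k ∈ K, φ (g * k) = φ g)
    (hψK : ∀ g : G, ∀ k ∈ K, ψ (k * g) = ψ g) (x : G) (g : G) {k : G} (hk : k ∈ K) :
    φ (g * k) * ψ ((g * k)⁻¹ * x) = φ g * ψ (g⁻¹ * x) := by
  rw [hφK g k hk, mul_inv_rev, mul_assoc, hψK _ _ (inv_mem hk)]

theorem stmt4_general {G : Type*} [Group G] [TopologicalSpace G] [IsTopologicalGroup G]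
    [MeasurableSpace G]
    (K P : Subgroup G) (μG : Measure G) (μP : Measure P) (μK : Measure K)
    (hμK : μK Set.univ = 1)
    (hFubini : ∀ f : G → ℝ, Continuous f → HasCompactSupport f →
      ∫ g, f g ∂μG = ∫ p : P, (∫ k : K, f ((p : G) * (k : G)) ∂μK) ∂μP)
    (φ ψ : G → ℝ) (hφ : Continuous φ) (hφc : HasCompactSupport φ)
    (hψ : Continuous ψ)
    (hφK : ∀ g : G, ∀ k ∈ K, φ (g * k) = φ g)
    (hψK : ∀ g : G, ∀ k ∈ K, ψ (g * k) = ψ g ∧ ψ (k * g) = ψ g)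
    (p₀ : P) :
    (∫ a, φ a * ψ (a⁻¹ * (p₀ : G)) ∂μG)
      = ∫ p : P, φ (p : G) * ψ (((p : G))⁻¹ * (p₀ : G)) ∂μP := by
  have hcont : Continuous fun a : G => φ a * ψ (a⁻¹ * (p₀ : G)) :=
    hφ.mul (hψ.comp (continuous_inv.mul continuous_const))
  have : IsProbabilityMeasure μK := ⟨hμK⟩
  exact integral_eq_integral_subgroup_of_mul_right_invariant K P μG μP μK _
    (hFubini _ hcont hφc.mul_right)
    fun g _ hk => convolution_integrand_mul_right_invariant K φ ψ hφK
      (fun g k hk => (hψK g k hk).2) _ g hk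

theorem stmt4 {G : Type*} [Group G] [TopologicalSpace G] [IsTopologicalGroup G]
    [MeasurableSpace G] [BorelSpace G] [LocallyCompactSpace G]
    [TotallyDisconnectedSpace G]
    (K P : Subgroup G) (hKc : IsCompact (K : Set G)) (hKo : IsOpen (K : Set G))
    (hP : IsClosed (P : Set G))
    (hIwasawa : ∀ g : G, ∃ p ∈ P, ∃ k ∈ K, g = p * k)
    (μG : Measure G) [μG.IsMulLeftInvariant] (hμGK : μG (K : Set G) = 1)
    (μP : Measure P) [μP.IsMulLeftInvariant] (hμPK : μP {x : P | (x : G) ∈ K} = 1)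
    (μK : Measure K) [μK.IsMulLeftInvariant] (hμK : μK Set.univ = 1)
    (hFubini : ∀ f : G → ℝ, Continuous f → HasCompactSupport f →
      ∫ g, f g ∂μG = ∫ p : P, (∫ k : K, f ((p : G) * (k : G)) ∂μK) ∂μP)
    (φ ψ : G → ℝ) (hφ : Continuous φ) (hφc : HasCompactSupport φ)
    (hψ : Continuous ψ) (hψc : HasCompactSupport ψ)
    (hφK : ∀ g : G, ∀ k ∈ K, φ (g * k) = φ g)
    (hψK : ∀ g : G, ∀ k ∈ K, ψ (g * k) = ψ g ∧ ψ (k * g) = ψ g)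
    (p₀ : P) :
    (∫ a, φ a * ψ (a⁻¹ * (p₀ : G)) ∂μG)
      = ∫ p : P, φ (p : G) * ψ (((p : G))⁻¹ * (p₀ : G)) ∂μP :=
  stmt4_general K P μG μP μK hμK hFubini φ ψ hφ hφc hψ hφK hψK p₀
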